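/- Assume char F ≠ 2 and let u_1 = (1,1,1,−1), u_2 = (1,1,1,1) ∈ V = F^4, and for u ∈ {u_1, u_2} let s_u: V → V be the reflection s_u(v) = v − (2⟨v,u⟩/⟨u,u⟩)u, where ⟨·,·⟩ is the standard bilinear form on F^4. Then σ_{i,j}(s_{u_1}(v), s_{u_1}(v')) = s_{u_1}(σ_{i,j}(v,v')) and σ_{i,j}(s_{u_2}(v), s_{u_2}(v')) = s_{u_2}(σ_{i,j}(v,v')) for all i, j ∈ I and v, v' ∈ V; consequently, the linear maps of V^σ[G] determined by v g_i ↦ s_{u_1}(v) g_i and by v g_i ↦ s_{u_2}(v) g_i (for all i ∈ {0,...,7}) are Lie algebra automorphisms of V^σ[G] of order 2. -/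
import Mathlib


namespace GGA

noncomputable section

variable (F : Type*) [Field F]

/-- The labelling `g_0, …, g_7` of the eight elements of `G = (ℤ/2ℤ)³`:
`g_0=(0,0,0), g_1=(1,0,0), g_2=(0,1,0), g_3=(0,0,1), g_4=(1,1,0), g_5=(0,1,1),
g_6=(1,1,1), g_7=(1,0,1)`. -/
def lab : Fin 8 → Fin 3 → ZMod 2 :=
  ![![0, 0, 0], ![1, 0, 0], ![0, 1, 0], ![0, 0, 1],
    ![1, 1, 0], ![0, 1, 1], ![1, 1, 1], ![1, 0, 1]]

/-- `star i j` is the unique index `k ∈ {0,…,7}` with `g_i + g_j = g_k`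
(the labelling `lab` is a bijection). -/
def star (i j : Fin 8) : Fin 8 := Function.invFun lab (lab i + lab j)

/-- The formula for `σ_{i,i+1}(r,s)`. -/
def f1 (r s : Fin 4 → F) : Fin 4 → F :=
  ![-(r 1 * s 0) - r 2 * s 2, -(r 1 * s 2) - r 2 * s 0,
    r 0 * s 1 + r 3 * s 3, r 0 * s 3 + r 3 * s 1]

/-- The formula for `σ_{i,i+2}(r,s)`. -/
def f2 (r s : Fin 4 → F) : Fin 4 → F :=
  ![r 1 * s 2 + r 3 * s 3, -(r 0 * s 0) - r 2 * s 1,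
    -(r 0 * s 1) - r 2 * s 0, r 1 * s 3 + r 3 * s 2]

/-- The formula for `σ_{i,i+4}(r,s)`. -/
def f4 (r s : Fin 4 → F) : Fin 4 → F :=
  ![-(r 0 * s 1) - r 1 * s 2, r 2 * s 0 + r 3 * s 3,
    -(r 0 * s 2) - r 1 * s 1, r 2 * s 3 + r 3 * s 0]

/-- The twist `σ : G × G → Bil(V × V, V)`, `V = F⁴`, written in terms of the indices:
`σ i j r s = σ_{i,j}(r,s)`.  For `i, j ∈ I = {1,…,7}` the value depends on the
difference `j - i (mod 7)`, matching the definition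
`σ_{i,i+1}, σ_{i,i+2}, σ_{i,i+4}` explicit, `σ_{0,i}=σ_{i,0}=σ_{0,0}=σ_{i,i}=0`,
`σ_{i,i+3}(r,s)=-σ_{i,i+4}(s,r)`, `σ_{i,i+5}(r,s)=-σ_{i,i+2}(s,r)`,
`σ_{i,i+6}(r,s)=-σ_{i,i+1}(s,r)`. -/
def sigma (i j : Fin 8) (r s : Fin 4 → F) : Fin 4 → F :=
  if i = 0 ∨ j = 0 ∨ i = j then 0
  else if ((j : ℕ) + 7 - (i : ℕ)) % 7 = 1 then f1 F r s
  else if ((j : ℕ) + 7 - (i : ℕ)) % 7 = 2 then f2 F r s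
  else if ((j : ℕ) + 7 - (i : ℕ)) % 7 = 3 then -f4 F s r
  else if ((j : ℕ) + 7 - (i : ℕ)) % 7 = 4 then f4 F r s
  else if ((j : ℕ) + 7 - (i : ℕ)) % 7 = 5 then -f2 F s r
  else -f1 F s r

/-- `single i r` is the formal sum `r gᵢ` in `V^σ[G]`, viewed as a function `G → V`. -/
def single (i : Fin 8) (r : Fin 4 → F) : Fin 8 → Fin 4 → F :=
  fun k => if k = i then r else 0

/-- The product of `V^σ[G]`: the unique bilinear extension of
`[r gᵢ, s gⱼ] = σ_{i,j}(r,s) g_{i*j}`. -/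
def bracket (x y : Fin 8 → Fin 4 → F) : Fin 8 → Fin 4 → F :=
  fun k => ∑ i : Fin 8, ∑ j : Fin 8, if star i j = k then sigma F i j (x i) (y j) else 0


/-- The standard bilinear form on `V = F⁴`. -/
def inn4 (u v : Fin 4 → F) : F := ∑ k, u k * v k

/-- The reflection `s_u(v) = v − (2⟨v,u⟩/⟨u,u⟩) u` through the hyperplane `u^⊥`. -/
def sRef (u v : Fin 4 → F) : Fin 4 → F :=
  v - ((2 * inn4 F v u) / inn4 F u u) • u

/-- The induced map `v gᵢ ↦ s_u(v) gᵢ` of `V^σ[G]`. -/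
def thetaRef (u : Fin 4 → F) (x : Fin 8 → Fin 4 → F) : Fin 8 → Fin 4 → F :=
  fun i => sRef F u (x i)

namespace GGA13Aux

open GGA

variable {F : Type*} [Field F]

lemma sRef_zero (u : Fin 4 → F) : sRef F u 0 = 0 := by
  funext k
  simp [sRef, inn4]

lemma sRef_neg (u v : Fin 4 → F) : sRef F u (-v) = -(sRef F u v) := by
  funext k
  simp only [sRef, inn4, Pi.sub_apply, Pi.smul_apply, Pi.neg_apply, smul_eq_mul,
    Fin.sum_univ_four]
  ring

lemma sRef_add (u a b : Fin 4 → F) : sRef F u (a + b) = sRef F u a + sRef F u b := by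
  funext k
  simp only [sRef, inn4, Pi.sub_apply, Pi.smul_apply, Pi.add_apply, smul_eq_mul,
    Fin.sum_univ_four]
  ring

lemma sRef_smul (u : Fin 4 → F) (c : F) (a : Fin 4 → F) :
    sRef F u (c • a) = c • sRef F u a := by
  funext k
  simp only [sRef, inn4, Pi.sub_apply, Pi.smul_apply, smul_eq_mul, Fin.sum_univ_four]
  ring

/-- `sRef` as a linear map. -/
def sRefL (u : Fin 4 → F) : (Fin 4 → F) →ₗ[F] (Fin 4 → F) where
  toFun := sRef F u
  map_add' := sRef_add u
  map_smul' := sRef_smul u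

lemma f1_u1 (h4 : (4:F) ≠ 0) (r s : Fin 4 → F) :
    f1 F (sRef F ![1,1,1,-1] r) (sRef F ![1,1,1,-1] s) = sRef F ![1,1,1,-1] (f1 F r s) := by
  funext k
  fin_cases k <;>
  · simp only [f1, f2, f4, sRef, inn4, Fin.sum_univ_four, Pi.sub_apply, Pi.smul_apply,
      smul_eq_mul, Matrix.cons_val_zero, Matrix.cons_val_one, Matrix.head_cons,
      Matrix.cons_val_two, Matrix.tail_cons, Matrix.cons_val_three, Matrix.cons_val_fin_one]
    norm_num
    field_simp
    ring

lemma f1_u2 (h4 : (4:F) ≠ 0) (r s : Fin 4 → F) :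
    f1 F (sRef F ![1,1,1,1] r) (sRef F ![1,1,1,1] s) = sRef F ![1,1,1,1] (f1 F r s) := by
  funext k
  fin_cases k <;>
  · simp only [f1, f2, f4, sRef, inn4, Fin.sum_univ_four, Pi.sub_apply, Pi.smul_apply,
      smul_eq_mul, Matrix.cons_val_zero, Matrix.cons_val_one, Matrix.head_cons,
      Matrix.cons_val_two, Matrix.tail_cons, Matrix.cons_val_three, Matrix.cons_val_fin_one]
    norm_num
    field_simp
    ring

lemma f2_u1 (h4 : (4:F) ≠ 0) (r s : Fin 4 → F) :
    f2 F (sRef F ![1,1,1,-1] r) (sRef F ![1,1,1,-1] s) = sRef F ![1,1,1,-1] (f2 F r s) := by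
  funext k
  fin_cases k <;>
  · simp only [f1, f2, f4, sRef, inn4, Fin.sum_univ_four, Pi.sub_apply, Pi.smul_apply,
      smul_eq_mul, Matrix.cons_val_zero, Matrix.cons_val_one, Matrix.head_cons,
      Matrix.cons_val_two, Matrix.tail_cons, Matrix.cons_val_three, Matrix.cons_val_fin_one]
    norm_num
    field_simp
    ring

lemma f2_u2 (h4 : (4:F) ≠ 0) (r s : Fin 4 → F) :
    f2 F (sRef F ![1,1,1,1] r) (sRef F ![1,1,1,1] s) = sRef F ![1,1,1,1] (f2 F r s) := by
  funext k
  fin_cases k <;>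
  · simp only [f1, f2, f4, sRef, inn4, Fin.sum_univ_four, Pi.sub_apply, Pi.smul_apply,
      smul_eq_mul, Matrix.cons_val_zero, Matrix.cons_val_one, Matrix.head_cons,
      Matrix.cons_val_two, Matrix.tail_cons, Matrix.cons_val_three, Matrix.cons_val_fin_one]
    norm_num
    field_simp
    ring

lemma f4_u1 (h4 : (4:F) ≠ 0) (r s : Fin 4 → F) :
    f4 F (sRef F ![1,1,1,-1] r) (sRef F ![1,1,1,-1] s) = sRef F ![1,1,1,-1] (f4 F r s) := by
  funext k
  fin_cases k <;>
  · simp only [f1, f2, f4, sRef, inn4, Fin.sum_univ_four, Pi.sub_apply, Pi.smul_apply,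
      smul_eq_mul, Matrix.cons_val_zero, Matrix.cons_val_one, Matrix.head_cons,
      Matrix.cons_val_two, Matrix.tail_cons, Matrix.cons_val_three, Matrix.cons_val_fin_one]
    norm_num
    field_simp
    ring

lemma f4_u2 (h4 : (4:F) ≠ 0) (r s : Fin 4 → F) :
    f4 F (sRef F ![1,1,1,1] r) (sRef F ![1,1,1,1] s) = sRef F ![1,1,1,1] (f4 F r s) := by
  funext k
  fin_cases k <;>
  · simp only [f1, f2, f4, sRef, inn4, Fin.sum_univ_four, Pi.sub_apply, Pi.smul_apply,
      smul_eq_mul, Matrix.cons_val_zero, Matrix.cons_val_one, Matrix.head_cons,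
      Matrix.cons_val_two, Matrix.tail_cons, Matrix.cons_val_three, Matrix.cons_val_fin_one]
    norm_num
    field_simp
    ring


lemma sigma_sRef {u : Fin 4 → F}
    (hu : u ∈ ({![1, 1, 1, -1], ![1, 1, 1, 1]} : Set (Fin 4 → F))) (h4 : (4:F) ≠ 0)
    (i j : Fin 8) (v v' : Fin 4 → F) :
    sigma F i j (sRef F u v) (sRef F u v') = sRef F u (sigma F i j v v') := by
  have H1 : ∀ r s : Fin 4 → F, f1 F (sRef F u r) (sRef F u s) = sRef F u (f1 F r s) := by
    rcases hu with h | h <;> subst h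
    exacts [f1_u1 h4, f1_u2 h4]
  have H2 : ∀ r s : Fin 4 → F, f2 F (sRef F u r) (sRef F u s) = sRef F u (f2 F r s) := by
    rcases hu with h | h <;> subst h
    exacts [f2_u1 h4, f2_u2 h4]
  have H4 : ∀ r s : Fin 4 → F, f4 F (sRef F u r) (sRef F u s) = sRef F u (f4 F r s) := by
    rcases hu with h | h <;> subst h
    exacts [f4_u1 h4, f4_u2 h4]
  unfold sigma
  split_ifs
  · exact (sRef_zero u).symm
  · exact H1 v v'
  · exact H2 v v'
  · rw [H4 v' v, ← sRef_neg]
  · exact H4 v v'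
  · rw [H2 v' v, ← sRef_neg]
  · rw [H1 v' v, ← sRef_neg]

lemma sRef_sRef {u : Fin 4 → F}
    (hu : u ∈ ({![1, 1, 1, -1], ![1, 1, 1, 1]} : Set (Fin 4 → F))) (h4 : (4:F) ≠ 0)
    (v : Fin 4 → F) : sRef F u (sRef F u v) = v := by
  rcases hu with h | h <;> subst h <;>
  · funext k
    fin_cases k <;>
    · simp only [sRef, inn4, Fin.sum_univ_four, Pi.sub_apply, Pi.smul_apply, smul_eq_mul,
        Matrix.cons_val_zero, Matrix.cons_val_one, Matrix.head_cons, Matrix.cons_val_two,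
        Matrix.tail_cons, Matrix.cons_val_three, Matrix.cons_val_fin_one]
      norm_num
      field_simp
      ring

end GGA13Aux

/-- **Statement 13.** (char F ≠ 2.)  For `u ∈ {u₁ = (1,1,1,−1), u₂ = (1,1,1,1)}`,
the reflection `s_u` commutes with the twist, `σ_{i,j}(s_u(v), s_u(v')) = s_u(σ_{i,j}(v,v'))`
for `i, j ∈ I`; consequently the linear maps `v gᵢ ↦ s_u(v) gᵢ` of `V^σ[G]` are


Lie algebra automorphisms of order `2`. -/
theorem reflections_give_order_two_automorphisms (h2 : (2 : F) ≠ 0) :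
    ∀ u ∈ ({![1, 1, 1, -1], ![1, 1, 1, 1]} : Set (Fin 4 → F)),
      (∀ i j : Fin 8, i ≠ 0 → j ≠ 0 → ∀ v v' : Fin 4 → F,
        sigma F i j (sRef F u v) (sRef F u v') = sRef F u (sigma F i j v v')) ∧
      (∀ x y : Fin 8 → Fin 4 → F, thetaRef F u (x + y) = thetaRef F u x + thetaRef F u y) ∧
      (∀ (c : F) (x : Fin 8 → Fin 4 → F), thetaRef F u (c • x) = c • thetaRef F u x) ∧
      (∀ x y : Fin 8 → Fin 4 → F,
        thetaRef F u (bracket F x y) = bracket F (thetaRef F u x) (thetaRef F u y)) ∧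
      Function.Bijective (thetaRef F u) ∧
      thetaRef F u ∘ thetaRef F u = id ∧
      thetaRef F u ≠ id := by
  intro u hu
  have h4 : (4:F) ≠ 0 := by
    have : (4:F) = 2 * 2 := by norm_num
    rw [this]
    exact mul_ne_zero h2 h2
  have hinv : ∀ x, thetaRef F u (thetaRef F u x) = x := by
    intro x
    funext i
    exact GGA13Aux.sRef_sRef hu h4 (x i)
  refine ⟨fun i j _ _ v v' => GGA13Aux.sigma_sRef hu h4 i j v v', ?_, ?_, ?_, ?_, ?_, ?_⟩
  · intro x y
    funext i
    exact GGA13Aux.sRef_add u (x i) (y i)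
  · intro c x
    funext i
    exact GGA13Aux.sRef_smul u c (x i)
  · intro x y
    funext k
    show sRef F u _ = _
    show GGA13Aux.sRefL u _ = _
    unfold bracket
    rw [map_sum]
    refine Finset.sum_congr rfl fun i _ => ?_
    rw [map_sum]
    refine Finset.sum_congr rfl fun j _ => ?_
    by_cases h : star i j = k
    · simp only [h, if_true]
      exact (GGA13Aux.sigma_sRef hu h4 i j (x i) (y j)).symm
    · simp only [h, if_false, map_zero]
  · exact Function.Involutive.bijective hinv
  · funext x
    exact hinv x
  · intro h
    have h0 := congrFun (congrFun (congrFun h (fun _ => u)) 0) 3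
    rcases hu with h | h <;> subst h <;>
    · simp only [thetaRef, sRef, inn4, Fin.sum_univ_four, Pi.sub_apply, Pi.smul_apply,
        smul_eq_mul, Matrix.cons_val_zero, Matrix.cons_val_one, Matrix.head_cons,
        Matrix.cons_val_two, Matrix.tail_cons, Matrix.cons_val_three, Matrix.cons_val_fin_one,
        id_eq] at h0
      norm_num at h0
      rcases h0 with h0 | h0
      · have h8 : (2:F) * 4 = 0 := by linear_combination h0
        exact h2 ((mul_eq_zero.mp h8).resolve_right h4)
      · exact h4 h0

end
end GGA
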